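/- Let α ∈ (0,1) and let X be a real random variable with E[max(0,−X)] < ∞. Then ES_α(X) = (1−α)^{−1} ∫_α^1 VaR_u(X) du, where the integral is the Lebesgue integral over u ∈ (α,1). -/

import Mathlib

open MeasureTheory Set

/-- The `α`-quantile of a real random variable `X`:
`q_α(X) = inf {x ∈ ℝ : P[X ≤ x] ≥ α}`. -/
noncomputable def quantile {Ω : Type*} [MeasurableSpace Ω] (μ : Measure Ω)
    (X : Ω → ℝ) (α : ℝ) : ℝ :=
  sInf {x : ℝ | ENNReal.ofReal α ≤ μ {ω | X ω ≤ x}}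

/-- Value-at-risk at level `α`: `VaR_α(X) = q_α(-X)`. -/
noncomputable def VaR {Ω : Type*} [MeasurableSpace Ω] (μ : Measure Ω)
    (X : Ω → ℝ) (α : ℝ) : ℝ :=
  quantile μ (fun ω => - X ω) α

/-- Expected Shortfall at level `α`:
`ES_α(X) = -(1-α)⁻¹ (E[X·1{-X ≥ q_α(-X)}] + q_α(-X)·(α - P[-X < q_α(-X)]))`. -/
noncomputable def ES {Ω : Type*} [MeasurableSpace Ω] (μ : Measure Ω)
    (X : Ω → ℝ) (α : ℝ) : ℝ :=
  - (1 - α)⁻¹ * ((∫ ω in {ω | quantile μ (fun ω' => - X ω') α ≤ - X ω}, X ω ∂μ)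
    + quantile μ (fun ω' => - X ω') α
      * (α - (μ {ω | - X ω < quantile μ (fun ω' => - X ω') α}).toReal))

/-!
On `(0, 1)` the quantile function `u ↦ q_u(Y)` of `Y = -X` is the generalized inverse of the
cdf `F` of `Y`: `q_u(Y) ≤ x ↔ u ≤ F x`. Hence it pushes Lebesgue measure on `(0, 1)` forward to
the law of `Y`. With `q = q_α(Y)`, both sides of the identity then equal
`E[(Y - q)⁺] + q (1 - α)`: on the `ES` side because `(Y - q)⁺` vanishes off `{q ≤ Y}`, on the
`VaR` side because `q_u(Y) ≥ q` for `u > α` and `q_u(Y) ≤ q` for `u ≤ α`.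
-/

open Filter Topology ProbabilityTheory

lemma StieltjesFunction.sInf_setOf_le_le_iff (F : StieltjesFunction ℝ)
    (h0 : Tendsto F atBot (𝓝 0)) (h1 : Tendsto F atTop (𝓝 1)) {u : ℝ} (hu : u ∈ Ioo 0 1)
    (x : ℝ) : sInf {y | u ≤ F y} ≤ x ↔ u ≤ F x := by
  set S := {y | u ≤ F y}
  have hne : S.Nonempty := (h1.eventually (eventually_ge_nhds hu.2)).exists
  have hbdd : BddBelow S := by
    obtain ⟨b, hb⟩ := (h0.eventually (eventually_lt_nhds hu.1)).exists_forall_of_atBot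
    exact ⟨b, fun y hy => le_of_not_gt fun hyb => (hb y hyb.le).not_ge hy⟩
  -- right-continuity of `F` makes the infimum attained
  have hmem : sInf S ∈ S := by
    refine ge_of_tendsto ((F.right_continuous _).tendsto.mono_left
      (nhdsWithin_mono _ Ioi_subset_Ici_self)) ?_
    filter_upwards [self_mem_nhdsWithin] with y (hy : sInf S < y)
    obtain ⟨z, hz, hzy⟩ := (csInf_lt_iff hbdd hne).1 hy
    exact hz.trans (F.mono hzy.le)
  exact ⟨fun h => hmem.trans (F.mono h), fun h => csInf_le hbdd h⟩

lemma setIntegral_eq_integral_max_sub_add {α : Type*} [MeasurableSpace α] {μ : Measure α}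
    [IsFiniteMeasure μ] {f : α → ℝ} {s : Set α} {c : ℝ} (hs : MeasurableSet s)
    (hf : Integrable (fun x => max 0 (f x - c)) μ) (hge : ∀ x ∈ s, c ≤ f x)
    (hle : ∀ᵐ x ∂μ, x ∉ s → f x ≤ c) :
    ∫ x in s, f x ∂μ = ∫ x, max 0 (f x - c) ∂μ + c * μ.real s := calc
  ∫ x in s, f x ∂μ = ∫ x in s, (max 0 (f x - c) + c) ∂μ :=
    setIntegral_congr_fun hs fun x hx => by rw [max_eq_right (sub_nonneg.2 (hge x hx))]; ring
  _ = ∫ x in s, max 0 (f x - c) ∂μ + c * μ.real s := by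
    rw [integral_add hf.integrableOn (integrableOn_const (measure_ne_top μ s)), setIntegral_const,
      smul_eq_mul, mul_comm]
  _ = ∫ x, max 0 (f x - c) ∂μ + c * μ.real s := by
    rw [setIntegral_eq_integral_of_ae_compl_eq_zero]
    filter_upwards [hle] with x hx hxs
    exact max_eq_left (sub_nonpos.2 (hx hxs))

lemma MeasureTheory.Integrable.max_zero_sub_const {α : Type*} [MeasurableSpace α] {μ : Measure α}
    [IsFiniteMeasure μ] {f : α → ℝ} (hf : AEStronglyMeasurable f μ)
    (h : Integrable (fun x => max 0 (f x)) μ) (c : ℝ) :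
    Integrable (fun x => max 0 (f x - c)) μ := by
  refine (h.add (integrable_const |c|)).mono' (by fun_prop) (ae_of_all _ fun x => ?_)
  rw [Real.norm_eq_abs, abs_of_nonneg (le_max_left _ _)]
  show max 0 (f x - c) ≤ max 0 (f x) + |c|
  exact max_le (by positivity) (by linarith [le_max_right 0 (f x), neg_abs_le c])

section
variable {Ω : Type*} [MeasurableSpace Ω] {μ : Measure Ω} [IsProbabilityMeasure μ] {Y : Ω → ℝ}

lemma quantile_eq_sInf_cdf (hY : Measurable Y) (u : ℝ) :
    quantile μ Y u = sInf {x | u ≤ cdf (μ.map Y) x} := by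
  have : IsProbabilityMeasure (μ.map Y) := Measure.isProbabilityMeasure_map hY.aemeasurable
  unfold quantile
  congr 1
  ext x
  rw [mem_ofPred_eq, mem_ofPred_eq, ← ENNReal.ofReal_le_ofReal_iff (cdf_nonneg _ x), ofReal_cdf,
    Measure.map_apply hY measurableSet_Iic]
  rfl

lemma quantile_le_iff (hY : Measurable Y) {u : ℝ} (hu : u ∈ Ioo 0 1) (x : ℝ) :
    quantile μ Y u ≤ x ↔ u ≤ cdf (μ.map Y) x := by
  have : IsProbabilityMeasure (μ.map Y) := Measure.isProbabilityMeasure_map hY.aemeasurable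
  rw [quantile_eq_sInf_cdf hY]
  exact (cdf (μ.map Y)).sInf_setOf_le_le_iff (tendsto_cdf_atBot _) (tendsto_cdf_atTop _) hu x

lemma monotoneOn_quantile (hY : Measurable Y) : MonotoneOn (quantile μ Y) (Ioo 0 1) :=
  fun _ hu _ hv huv => (quantile_le_iff hY hu _).2 (huv.trans ((quantile_le_iff hY hv _).1 le_rfl))

lemma aemeasurable_quantile (hY : Measurable Y) :
    AEMeasurable (quantile μ Y) (volume.restrict (Ioo 0 1)) :=
  aemeasurable_restrict_of_monotoneOn measurableSet_Ioo (monotoneOn_quantile hY)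

lemma map_quantile_volume_Ioo (hY : Measurable Y) :
    (volume.restrict (Ioo 0 1)).map (quantile μ Y) = μ.map Y := by
  have : IsProbabilityMeasure (μ.map Y) := Measure.isProbabilityMeasure_map hY.aemeasurable
  refine (Measure.ext_of_Iic _ _ fun x => ?_).symm
  have hpre : quantile μ Y ⁻¹' Iic x ∩ Ioo 0 1 = Iic (cdf (μ.map Y) x) ∩ Ioo 0 1 := by
    ext u
    simp only [mem_inter_iff, mem_preimage, mem_Iic]
    exact and_congr_left (quantile_le_iff hY · x)
  rw [Measure.map_apply_of_aemeasurable (aemeasurable_quantile hY) measurableSet_Iic,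
    Measure.restrict_apply' measurableSet_Ioo, hpre, ← Measure.restrict_apply' measurableSet_Ioo,
    Measure.restrict_congr_set Ioo_ae_eq_Ioc, Measure.restrict_apply' measurableSet_Ioc,
    Iic_inter_Ioc_of_le (cdf_le_one _ x), Real.volume_Ioc, sub_zero, ofReal_cdf]

lemma integral_comp_quantile (hY : Measurable Y) {g : ℝ → ℝ}
    (hg : AEStronglyMeasurable g (μ.map Y)) :
    ∫ u in Ioo 0 1, g (quantile μ Y u) = ∫ ω, g (Y ω) ∂μ := by
  have hmap := map_quantile_volume_Ioo (μ := μ) hY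
  rw [← integral_map (aemeasurable_quantile hY) (hmap.symm ▸ hg), hmap,
    integral_map hY.aemeasurable hg]

lemma integrableOn_comp_quantile_iff (hY : Measurable Y) {g : ℝ → ℝ}
    (hg : AEStronglyMeasurable g (μ.map Y)) :
    IntegrableOn (fun u => g (quantile μ Y u)) (Ioo 0 1) ↔ Integrable (fun ω => g (Y ω)) μ := by
  have hmap := map_quantile_volume_Ioo (μ := μ) hY
  rw [IntegrableOn, ← Function.comp_def g,
    ← integrable_map_measure (hmap.symm ▸ hg) (aemeasurable_quantile hY), hmap,
    integrable_map_measure hg hY.aemeasurable, Function.comp_def]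

lemma setIntegral_quantile_Ioo (hY : Measurable Y) {α : ℝ} (hα : α ∈ Ioo 0 1)
    (hint : Integrable (fun ω => max 0 (Y ω - quantile μ Y α)) μ) :
    ∫ u in Ioo α 1, quantile μ Y u
      = ∫ ω, max 0 (Y ω - quantile μ Y α) ∂μ + quantile μ Y α * (1 - α) := by
  have hsub : Ioo α 1 ⊆ Ioo 0 1 := Ioo_subset_Ioo_left hα.1.le
  have hge : ∀ u ∈ Ioo α 1, quantile μ Y α ≤ quantile μ Y u :=
    fun u hu => monotoneOn_quantile hY hα (hsub hu) hu.1.le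
  have hle : ∀ᵐ u ∂volume.restrict (Ioo 0 1), u ∉ Ioo α 1 → quantile μ Y u ≤ quantile μ Y α := by
    filter_upwards [ae_restrict_mem measurableSet_Ioo] with u hu hnot
    exact monotoneOn_quantile hY hu hα (le_of_not_gt fun h => hnot ⟨h, hu.2⟩)
  have hg : AEStronglyMeasurable (fun y => max 0 (y - quantile μ Y α)) (μ.map Y) := by fun_prop
  have hint' := (integrableOn_comp_quantile_iff hY hg).2 hint
  rw [← inter_eq_left.2 hsub, ← Measure.restrict_restrict measurableSet_Ioo,
    setIntegral_eq_integral_max_sub_add measurableSet_Ioo hint' hge hle,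
    integral_comp_quantile hY hg, measureReal_restrict_apply measurableSet_Ioo,
    inter_eq_left.2 hsub, Real.volume_real_Ioo_of_le hα.2.le]

end

/-- `ES_α(X) = (1-α)⁻¹ ∫_α^1 VaR_u(X) du`. -/
theorem es_eq_integral_var {Ω : Type*} [MeasurableSpace Ω] (μ : Measure Ω)
    [IsProbabilityMeasure μ] (α : ℝ) (hα : α ∈ Set.Ioo (0 : ℝ) 1)
    (X : Ω → ℝ) (hX : Measurable X)
    (hint : Integrable (fun ω => max 0 (- X ω)) μ) :
    ES μ X α = (1 - α)⁻¹ * ∫ u in Set.Ioo α 1, VaR μ X u := by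
  set Y : Ω → ℝ := fun ω => - X ω
  have hY : Measurable Y := hX.neg
  set q := quantile μ Y α
  have hpos : Integrable (fun ω => max 0 (Y ω - q)) μ :=
    hint.max_zero_sub_const hY.aestronglyMeasurable q
  have hΩ : ∫ ω in {ω | q ≤ Y ω}, Y ω ∂μ
      = ∫ ω, max 0 (Y ω - q) ∂μ + q * (1 - μ.real {ω | Y ω < q}) := by
    rw [setIntegral_eq_integral_max_sub_add (measurableSet_le measurable_const hY) hpos
      (fun _ h => h) (ae_of_all _ fun _ h => (not_le.1 h).le), ← probReal_compl_eq_one_sub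
      (measurableSet_lt hY measurable_const)]
    simp only [compl_ofPred, not_lt]
  have hXY : ∫ ω in {ω | q ≤ Y ω}, X ω ∂μ = - ∫ ω in {ω | q ≤ Y ω}, Y ω ∂μ := by
    rw [← integral_neg]; simp only [Y, neg_neg]
  rw [ES]
  change -(1 - α)⁻¹ * (∫ ω in {ω | q ≤ Y ω}, X ω ∂μ + q * (α - μ.real {ω | Y ω < q}))
    = (1 - α)⁻¹ * ∫ u in Ioo α 1, quantile μ Y u
  rw [hXY, hΩ, setIntegral_quantile_Ioo hY hα hpos]
  ring
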